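/- Let F be a bounded operator with closed range, F = U|F| its polar decomposition, and X a partial isometry such that F − X is compact. Then the difference of projections P − Q is compact, where P = U*U is the projection onto ker(F)^⊥ and Q = X*X. In particular (P, Q) is a Fredholm pair of projections. -/

import Mathlib

noncomputable section

/-- The sequence space ℓ² over ℂ. -/
abbrev L2C : Type := lp (fun _ : ℕ => ℂ) 2

/-- The standard orthonormal basis vectors of ℓ². -/
def stdVec (i : ℕ) : L2C := lp.single 2 i 1

/-- A bounded operator between Hilbert spaces is a partial isometry if it is
isometric on the orthogonal complement of its kernel. -/
def IsPartialIsometry {E F : Type*} [NormedAddCommGroup E] [InnerProductSpace ℂ E]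
    [NormedAddCommGroup F] [InnerProductSpace ℂ F] (X : E →L[ℂ] F) : Prop :=
  ∀ v ∈ (LinearMap.ker (X : E →ₗ[ℂ] F))ᗮ, ‖X v‖ = ‖v‖

/-- A bounded operator from ℓ² is Hilbert–Schmidt if the squared norms of the images
of the standard basis vectors are summable. -/
def IsHS {H : Type*} [NormedAddCommGroup H] [InnerProductSpace ℂ H]
    (T : L2C →L[ℂ] H) : Prop := Summable fun i => ‖T (stdVec i)‖ ^ 2

/-- Squared Hilbert–Schmidt norm of a bounded operator from ℓ². -/
def hsNormSq {H : Type*} [NormedAddCommGroup H] [InnerProductSpace ℂ H]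
    (T : L2C →L[ℂ] H) : ℝ := ∑' i, ‖T (stdVec i)‖ ^ 2

/-- `U` is the partial isometry in the polar decomposition `F = U|F|` of `F`:
`U` is a partial isometry with the same kernel as `F`, `U* F = |F|` is positive
and `F = U (U* F)`. -/
def IsPolarDecomp {H : Type*} [NormedAddCommGroup H] [InnerProductSpace ℂ H]
    [CompleteSpace H] (F U : L2C →L[ℂ] H) : Prop :=
  IsPartialIsometry U ∧ LinearMap.ker (U : L2C →ₗ[ℂ] H) = LinearMap.ker (F : L2C →ₗ[ℂ] H) ∧
  (ContinuousLinearMap.adjoint U ∘L F).IsPositive ∧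
  F = U ∘L (ContinuousLinearMap.adjoint U ∘L F)

/-- A pair of projections `(P, Q)` is a Fredholm pair if `ker Q ∩ ran P` and
`ran Q ∩ ker P` are both finite dimensional. -/
def FredholmPair {E : Type*} [NormedAddCommGroup E] [InnerProductSpace ℂ E]
    (P Q : E →L[ℂ] E) : Prop :=
  FiniteDimensional ℂ ↥(LinearMap.ker (Q : E →ₗ[ℂ] E) ⊓ LinearMap.range (P : E →ₗ[ℂ] E)) ∧
  FiniteDimensional ℂ ↥(LinearMap.range (Q : E →ₗ[ℂ] E) ⊓ LinearMap.ker (P : E →ₗ[ℂ] E))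

/-- The index of a Fredholm pair of projections:
`j(P,Q) = dim(ker Q ∩ ran P) - dim(ran Q ∩ ker P)`. -/
def pairIndex {E : Type*} [NormedAddCommGroup E] [InnerProductSpace ℂ E]
    (P Q : E →L[ℂ] E) : ℤ :=
  (Module.finrank ℂ ↥(LinearMap.ker (Q : E →ₗ[ℂ] E) ⊓ LinearMap.range (P : E →ₗ[ℂ] E)) : ℤ) -
  (Module.finrank ℂ ↥(LinearMap.range (Q : E →ₗ[ℂ] E) ⊓ LinearMap.ker (P : E →ₗ[ℂ] E)) : ℤ)

/-! Write `P_T` (`T.supportProjection`) for the orthogonal projection onto `(ker T)ᗮ`.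
A partial isometry `X` has closed range and `X†X = P_X`, and `U†U = P_U = P_F` because
`ker U = ker F`. An operator `T` with closed range restricts to an isomorphism
`(ker T)ᗮ ≃ ran T`, which yields a bounded `L` with `L T = P_T`; since `T P_T = T`, this gives
`P_F - P_F P_X = L (F - X) (1 - P_X)`, a compact operator, and symmetrically `P_X - P_X P_F` is
compact. Compactness passes to adjoints (if `T†T` is compact so is `T`, as
`‖T z‖² ≤ ‖T†T z‖ ‖z‖`), so `P_F - P_X = (P_F - P_F P_X) - (P_X - P_X P_F)†` is compact.
Finally `ker Q ⊓ ran P` and `ran Q ⊓ ker P` lie in the `1`-eigenspaces of the compact operators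
`P - Q` and `Q - P`, which are finite dimensional. -/

open ContinuousLinearMap Submodule

section CompactAdjoint

variable {𝕜 E G : Type*} [RCLike 𝕜] [NormedAddCommGroup E] [InnerProductSpace 𝕜 E]
  [NormedAddCommGroup G] [InnerProductSpace 𝕜 G] [CompleteSpace E] [CompleteSpace G]

theorem ContinuousLinearMap.apply_norm_sq_le_adjoint_comp_self (T : E →L[𝕜] G) (z : E) :
    ‖T z‖ ^ 2 ≤ ‖(adjoint T ∘L T) z‖ * ‖z‖ := by
  rw [apply_norm_sq_eq_inner_adjoint_left]
  exact (RCLike.re_le_norm _).trans (norm_inner_le_norm _ _)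

theorem IsCompactOperator.of_adjoint_comp_self {T : E →L[𝕜] G}
    (h : IsCompactOperator (adjoint T ∘L T)) : IsCompactOperator T := by
  set B := Metric.closedBall (0 : E) 1
  refine
    (isCompactOperator_iff_isCompact_closure_image_closedBall (T : E →ₗ[𝕜] G) one_pos).2 ?_
  refine TotallyBounded.isCompact_of_isClosed (TotallyBounded.closure ?_) isClosed_closure
  rw [Metric.totallyBounded_iff]
  intro ε hε
  have hTT : TotallyBounded ((adjoint T ∘L T) '' B) :=
    (h.isCompact_closure_image_closedBall 1).totallyBounded.subset subset_closure
  obtain ⟨t, htB, htfin, hcover⟩ := Set.exists_subset_image_finite_and.1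
    (Metric.finite_approx_of_totallyBounded hTT (ε ^ 2 / 2) (by positivity))
  refine ⟨T '' t, htfin.image _, ?_⟩
  rintro _ ⟨z, hz, rfl⟩
  obtain ⟨x, hxt, hzx⟩ : ∃ x ∈ t, ‖(adjoint T ∘L T) (z - x)‖ < ε ^ 2 / 2 := by
    simpa [Set.biUnion_image, dist_eq_norm] using hcover ⟨z, hz, rfl⟩
  refine Set.mem_biUnion (Set.mem_image_of_mem T hxt) ?_
  have hdist : ‖z - x‖ ≤ 2 := by
    have := norm_sub_le_of_le (mem_closedBall_zero_iff.1 hz) (mem_closedBall_zero_iff.1 (htB hxt))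
    linarith
  have : ‖T (z - x)‖ ^ 2 < ε ^ 2 := by
    nlinarith [T.apply_norm_sq_le_adjoint_comp_self (z - x), norm_nonneg (z - x),
      norm_nonneg ((adjoint T ∘L T) (z - x))]
  rw [Metric.mem_ball, dist_eq_norm, coe_coe, ← map_sub]
  exact lt_of_pow_lt_pow_left₀ 2 hε.le this

theorem IsCompactOperator.adjoint {T : E →L[𝕜] G} (h : IsCompactOperator T) :
    IsCompactOperator (adjoint T) :=
  .of_adjoint_comp_self <| by rw [adjoint_adjoint]; exact h.comp_clm _

end CompactAdjoint

section SupportProjection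

variable {𝕜 E G : Type*} [RCLike 𝕜] [NormedAddCommGroup E] [InnerProductSpace 𝕜 E]
  [NormedAddCommGroup G] [InnerProductSpace 𝕜 G]

namespace ContinuousLinearMap

theorem injective_comp_subtypeL_orthogonal_ker (T : E →L[𝕜] G) :
    Function.Injective (T ∘L (LinearMap.ker (T : E →ₗ[𝕜] G))ᗮ.subtypeL) := by
  rw [← coe_coe, ← LinearMap.ker_eq_bot, Submodule.eq_bot_iff]
  intro x hx
  exact Subtype.ext <| (orthogonal_disjoint _).le_bot ⟨hx, x.2⟩

variable [CompleteSpace E]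

def supportProjection (T : E →L[𝕜] G) : E →L[𝕜] E :=
  (LinearMap.ker (T : E →ₗ[𝕜] G))ᗮ.starProjection

theorem isIdempotentElem_supportProjection (T : E →L[𝕜] G) :
    IsIdempotentElem T.supportProjection :=
  isIdempotentElem_starProjection _

theorem adjoint_supportProjection (T : E →L[𝕜] G) :
    adjoint T.supportProjection = T.supportProjection :=
  (isSelfAdjoint_starProjection _).adjoint_eq

theorem supportProjection_eq_of_ker_eq {G' : Type*} [NormedAddCommGroup G']
    [InnerProductSpace 𝕜 G'] {S : E →L[𝕜] G} {T : E →L[𝕜] G'}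
    (h : LinearMap.ker (S : E →ₗ[𝕜] G) = LinearMap.ker (T : E →ₗ[𝕜] G')) :
    S.supportProjection = T.supportProjection := by
  simp only [supportProjection, h]

theorem sub_supportProjection_mem_ker (T : E →L[𝕜] G) (v : E) :
    v - T.supportProjection v ∈ LinearMap.ker (T : E →ₗ[𝕜] G) := by
  have := (isClosed_ker T).completeSpace_coe
  rw [← orthogonal_orthogonal (LinearMap.ker (T : E →ₗ[𝕜] G))]
  exact sub_starProjection_mem_orthogonal v

theorem comp_supportProjection (T : E →L[𝕜] G) : T ∘L T.supportProjection = T := by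
  ext v
  have := T.sub_supportProjection_mem_ker v
  rw [LinearMap.mem_ker, coe_coe, map_sub, sub_eq_zero] at this
  exact this.symm

theorem range_comp_subtypeL_orthogonal_ker (T : E →L[𝕜] G) :
    Set.range (T ∘L (LinearMap.ker (T : E →ₗ[𝕜] G))ᗮ.subtypeL) = Set.range T := by
  rw [coe_comp]
  refine (Set.range_comp_subset_range _ _).antisymm ?_
  rintro _ ⟨v, rfl⟩
  exact ⟨(LinearMap.ker (T : E →ₗ[𝕜] G))ᗮ.orthogonalProjectionOnto v,
    congr($(T.comp_supportProjection) v)⟩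

theorem exists_comp_eq_supportProjection [CompleteSpace G] {T : E →L[𝕜] G}
    (hT : IsClosed (Set.range T)) : ∃ L : G →L[𝕜] E, L ∘L T = T.supportProjection := by
  set K := (LinearMap.ker (T : E →ₗ[𝕜] G))ᗮ
  set T₁ := T ∘L K.subtypeL
  have hclosed : IsClosed (Set.range T₁) := T.range_comp_subtypeL_orthogonal_ker ▸ hT
  have : CompleteSpace (LinearMap.range (T₁ : K →ₗ[𝕜] G)) := by
    rw [← coe_coe, ← LinearMap.coe_range] at hclosed
    exact hclosed.completeSpace_coe
  let e := T₁.equivRange T.injective_comp_subtypeL_orthogonal_ker hclosed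
  refine ⟨K.subtypeL ∘L (e.symm : _ →L[𝕜] K) ∘L
    (LinearMap.range (T₁ : K →ₗ[𝕜] G)).orthogonalProjectionOnto, ?_⟩
  ext v
  have hv : T v = T₁ (K.orthogonalProjectionOnto v) := congr($(T.comp_supportProjection) v).symm
  have hproj : (LinearMap.range (T₁ : K →ₗ[𝕜] G)).orthogonalProjectionOnto (T v) =
      ⟨T₁ (K.orthogonalProjectionOnto v), LinearMap.mem_range_self _ _⟩ := by
    rw [hv]
    exact orthogonalProjectionOnto_mem_subspace_eq_self
      (K := LinearMap.range (T₁ : K →ₗ[𝕜] G)) ⟨_, _⟩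
  change
    (e.symm ((LinearMap.range (T₁ : K →ₗ[𝕜] G)).orthogonalProjectionOnto (T v)) : E) = _
  rw [hproj, equivRange_symm_apply]
  rfl

end ContinuousLinearMap

end SupportProjection

section CompactDifference

variable {𝕜 E G : Type*} [RCLike 𝕜] [NormedAddCommGroup E] [InnerProductSpace 𝕜 E]
  [NormedAddCommGroup G] [InnerProductSpace 𝕜 G] [CompleteSpace E] [CompleteSpace G]

theorem isCompactOperator_supportProjection_sub_comp {F X : E →L[𝕜] G}
    (hF : IsClosed (Set.range F)) (hFX : IsCompactOperator (F - X)) :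
    IsCompactOperator (F.supportProjection - F.supportProjection ∘L X.supportProjection) := by
  obtain ⟨L, hL⟩ := exists_comp_eq_supportProjection hF
  have hsub : (F - X) ∘L (ContinuousLinearMap.id 𝕜 E - X.supportProjection) =
      F - F ∘L X.supportProjection := by
    rw [comp_sub, sub_comp, sub_comp, X.comp_supportProjection, comp_id, comp_id]
    abel
  have hfactor : F.supportProjection - F.supportProjection ∘L X.supportProjection =
      L ∘L (F - X) ∘L (ContinuousLinearMap.id 𝕜 E - X.supportProjection) := by
    rw [hsub, comp_sub, ← comp_assoc, hL]
  rw [hfactor]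
  exact (hFX.comp_clm _).clm_comp L

theorem isCompactOperator_supportProjection_sub {F X : E →L[𝕜] G}
    (hF : IsClosed (Set.range F)) (hX : IsClosed (Set.range X))
    (hFX : IsCompactOperator (F - X)) :
    IsCompactOperator (F.supportProjection - X.supportProjection) := by
  have hXF : IsCompactOperator (X - F) := by
    rw [← neg_sub, FunLike.coe_neg]
    exact hFX.neg
  have h := (isCompactOperator_supportProjection_sub_comp hF hFX).sub
    (isCompactOperator_supportProjection_sub_comp hX hXF).adjoint
  rw [← FunLike.coe_sub, map_sub, adjoint_comp, adjoint_supportProjection,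
    adjoint_supportProjection] at h
  have hdecomp : F.supportProjection - X.supportProjection =
      F.supportProjection - F.supportProjection ∘L X.supportProjection -
        (X.supportProjection - F.supportProjection ∘L X.supportProjection) := by
    abel
  rwa [hdecomp]

end CompactDifference

section PartialIsometry

variable {E G : Type*} [NormedAddCommGroup E] [InnerProductSpace ℂ E]
  [NormedAddCommGroup G] [InnerProductSpace ℂ G] [CompleteSpace E] {X : E →L[ℂ] G}

namespace IsPartialIsometry

def restrictInitial (hX : IsPartialIsometry X) :
    (LinearMap.ker (X : E →ₗ[ℂ] G))ᗮ →ₗᵢ[ℂ] G where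
  toLinearMap := (X ∘L (LinearMap.ker (X : E →ₗ[ℂ] G))ᗮ.subtypeL : _ →ₗ[ℂ] G)
  norm_map' x := hX x x.2

theorem isClosed_range (hX : IsPartialIsometry X) : IsClosed (Set.range X) := by
  rw [← X.range_comp_subtypeL_orthogonal_ker]
  exact hX.restrictInitial.isometry.isClosedEmbedding.isClosed_range

theorem adjoint_comp_self [CompleteSpace G] (hX : IsPartialIsometry X) :
    adjoint X ∘L X = X.supportProjection := by
  ext v
  refine ext_inner_right ℂ fun w => ?_
  set P := X.supportProjection
  have hP (u : E) : P u ∈ (LinearMap.ker (X : E →ₗ[ℂ] G))ᗮ := starProjection_apply_mem _ u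
  have hXP (u : E) : X (P u) = X u := congr($(X.comp_supportProjection) u)
  have hPP (u : E) : P (P u) = P u := congr($(X.isIdempotentElem_supportProjection.eq) u)
  calc inner ℂ ((adjoint X ∘L X) v) w = inner ℂ (X (P v)) (X (P w)) := by
        rw [comp_apply, adjoint_inner_left, hXP, hXP]
    _ = inner ℂ (P v) (P w) := hX.restrictInitial.inner_map_map ⟨_, hP v⟩ ⟨_, hP w⟩
    _ = inner ℂ (P v) w := by
        rw [← adjoint_inner_left, X.adjoint_supportProjection, hPP]

end IsPartialIsometry

end PartialIsometry

section FredholmPair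

variable {E : Type*} [NormedAddCommGroup E] [InnerProductSpace ℂ E] [CompleteSpace E]

theorem finiteDimensional_ker_inf_range_of_isCompactOperator_sub {A B : E →L[ℂ] E}
    (hA : IsIdempotentElem A) (hAB : IsCompactOperator (A - B)) :
    FiniteDimensional ℂ
      ↥(LinearMap.ker (B : E →ₗ[ℂ] E) ⊓ LinearMap.range (A : E →ₗ[ℂ] E)) := by
  have := finite_dimensional_eigenspace hAB 1 one_ne_zero
  refine Submodule.finiteDimensional_of_le
    (S₂ := Module.End.eigenspace ((A - B : E →L[ℂ] E) : E →ₗ[ℂ] E) 1) ?_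
  rintro v ⟨hBv, u, rfl⟩
  rw [Module.End.mem_eigenspace_iff, one_smul]
  have hB : B (A u) = 0 := hBv
  have hAA : A (A u) = A u := congr($(hA.eq) u)
  simp [hB, hAA]

theorem fredholmPair_of_isCompactOperator_sub {P Q : E →L[ℂ] E} (hP : IsIdempotentElem P)
    (hQ : IsIdempotentElem Q) (hPQ : IsCompactOperator (P - Q)) : FredholmPair P Q := by
  refine ⟨finiteDimensional_ker_inf_range_of_isCompactOperator_sub hP hPQ, ?_⟩
  rw [inf_comm]
  refine finiteDimensional_ker_inf_range_of_isCompactOperator_sub hQ ?_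
  rw [← neg_sub, FunLike.coe_neg]
  exact hPQ.neg

end FredholmPair

/-- If `F` has closed range, `F = U|F|` is its polar decomposition, and `X` is a partial
isometry with `F - X` compact, then `P - Q` is compact, where `P = U*U` is the
projection onto `ker(F)ᗮ` and `Q = X*X`; in particular `(P, Q)` is a Fredholm pair. -/
theorem stmt_9 {H : Type*} [NormedAddCommGroup H] [InnerProductSpace ℂ H]
    [CompleteSpace H] (F U X : L2C →L[ℂ] H)
    (hran : IsClosed (Set.range F)) (hpolar : IsPolarDecomp F U)
    (hX : IsPartialIsometry X) (hcpt : IsCompactOperator ⇑(F - X)) :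
    IsCompactOperator
        ⇑(ContinuousLinearMap.adjoint U ∘L U - ContinuousLinearMap.adjoint X ∘L X) ∧
      FredholmPair (ContinuousLinearMap.adjoint U ∘L U)
        (ContinuousLinearMap.adjoint X ∘L X) := by
  obtain ⟨hU, hker, -, -⟩ := hpolar
  have hP : adjoint U ∘L U = F.supportProjection := by
    rw [hU.adjoint_comp_self, supportProjection_eq_of_ker_eq hker]
  have hPQ : IsCompactOperator (F.supportProjection - X.supportProjection) :=
    isCompactOperator_supportProjection_sub hran hX.isClosed_range hcpt
  rw [hP, hX.adjoint_comp_self]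
  exact ⟨hPQ, fredholmPair_of_isCompactOperator_sub F.isIdempotentElem_supportProjection
    X.isIdempotentElem_supportProjection hPQ⟩

end
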